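/- For real parameters m > 0 and q > 0, the Bardeen metric function f(r) = 1 − 2 m r² / (r² + q²)^(3/2) has a zero in (0, ∞) if and only if 3 √3 q ≤ 4 m. In particular, when 3 √3 q < 4 m the function f changes sign: f(0) = 1 > 0 while f(√2 q) = 1 − 4 m / (3 √3 q) < 0, so a horizon exists. -/
import Mathlib

lemma rpow32 (x : ℝ) (hx : 0 ≤ x) : x ^ ((3:ℝ)/2) = Real.sqrt (x^3) := by
  rw [show (3:ℝ)/2 = (3:ℝ) * (1/2) by ring, Real.rpow_mul hx, Real.sqrt_eq_rpow,
    show (x:ℝ) ^ (3:ℝ) = x ^ (3:ℕ) by rw [← Real.rpow_natCast x 3]; norm_num]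

lemma key (q r : ℝ) (hq : 0 ≤ q) :
    3 * Real.sqrt 3 / 2 * q * r ^ 2 ≤ (r ^ 2 + q ^ 2) ^ ((3:ℝ)/2) := by
  rw [rpow32 _ (by positivity)]
  have h2 : 3 * Real.sqrt 3 / 2 * q * r ^ 2
      = Real.sqrt (3 * (3/2 * q * r ^ 2) ^ 2) := by
    rw [Real.sqrt_mul (by norm_num), Real.sqrt_sq (by positivity)]
    ring
  rw [h2]
  apply Real.sqrt_le_sqrt
  nlinarith [mul_nonneg (sq_nonneg (r^2 - 2*q^2)) (by positivity : (0:ℝ) ≤ r^2 + q^2/4)]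

/-- Metric function of the Bardeen regular black hole. -/
noncomputable def bardeenF (m q r : ℝ) : ℝ :=
  1 - 2 * m * r ^ 2 / (r ^ 2 + q ^ 2) ^ ((3 : ℝ) / 2)

lemma bardeen_eval (m q : ℝ) (hq : 0 < q) :
    bardeenF m q (Real.sqrt 2 * q) = 1 - 4 * m / (3 * Real.sqrt 3 * q) := by
  unfold bardeenF
  have h2 : (Real.sqrt 2 * q) ^ 2 = 2 * q ^ 2 := by
    rw [mul_pow, Real.sq_sqrt (by norm_num : (0:ℝ) ≤ 2)]
  rw [h2, show (2*q^2 + q^2 : ℝ) = 3*q^2 by ring, rpow32 _ (by positivity),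
    show ((3:ℝ)*q^2)^3 = 27 * (q^3)^2 by ring,
    Real.sqrt_mul (by norm_num), Real.sqrt_sq (by positivity),
    show (27:ℝ) = 3^2*3 by norm_num, Real.sqrt_mul (by positivity),
    Real.sqrt_sq (by norm_num)]
  have hs3 : Real.sqrt 3 ≠ 0 := by positivity
  have hq' : q ≠ 0 := hq.ne'
  field_simp
  ring

/-- For `m > 0`, `q > 0`, the Bardeen metric function has a zero in `(0, ∞)`
iff `3√3 q ≤ 4m`; when `3√3 q < 4m` it changes sign: `f(0) = 1 > 0` while
`f(√2 q) = 1 − 4m/(3√3 q) < 0`, so a horizon exists. -/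
theorem bardeen_horizon_exists (m q : ℝ) (hm : 0 < m) (hq : 0 < q) :
    ((∃ r ∈ Set.Ioi (0 : ℝ), bardeenF m q r = 0) ↔ 3 * Real.sqrt 3 * q ≤ 4 * m) ∧
    (3 * Real.sqrt 3 * q < 4 * m →
      bardeenF m q 0 = 1 ∧ 0 < bardeenF m q 0 ∧
      bardeenF m q (Real.sqrt 2 * q) = 1 - 4 * m / (3 * Real.sqrt 3 * q) ∧
      bardeenF m q (Real.sqrt 2 * q) < 0) := by
  have hs3 : (0:ℝ) < Real.sqrt 3 := by positivity
  have hden : (0:ℝ) < 3 * Real.sqrt 3 * q := by positivity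
  have hf0 : bardeenF m q 0 = 1 := by
    simp [bardeenF]
  have heval := bardeen_eval m q hq
  constructor
  · constructor
    · rintro ⟨r, hr, hfr⟩
      have hr' : (0:ℝ) < r := hr
      have hD : 0 < (r^2+q^2) ^ ((3:ℝ)/2) := Real.rpow_pos_of_pos (by positivity) _
      have hEq : (r^2+q^2) ^ ((3:ℝ)/2) = 2*m*r^2 := by
        unfold bardeenF at hfr
        field_simp at hfr
        linarith
      have hk := key q r hq.le
      rw [hEq] at hk
      have hr2 : 0 < r^2 := by positivity
      nlinarith
    · intro h
      have hble : bardeenF m q (Real.sqrt 2 * q) ≤ 0 := by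
        rw [heval]
        have : (1:ℝ) ≤ 4*m/(3*Real.sqrt 3*q) := (one_le_div hden).mpr h
        linarith
      have hb0 : (0:ℝ) ≤ Real.sqrt 2 * q := by positivity
      have hcont : ContinuousOn (bardeenF m q) (Set.Icc 0 (Real.sqrt 2 * q)) := by
        apply Continuous.continuousOn
        unfold bardeenF
        apply Continuous.sub continuous_const
        apply Continuous.div (by continuity)
        · exact ((continuous_pow 2).add continuous_const).rpow_const
            (fun x => Or.inr (by norm_num))
        · intro x
          exact (Real.rpow_pos_of_pos (by positivity) _).ne'
      have hivt := intermediate_value_Icc' hb0 hcont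
      have h0mem : (0:ℝ) ∈ Set.Icc (bardeenF m q (Real.sqrt 2 * q)) (bardeenF m q 0) := by
        constructor
        · exact hble
        · rw [hf0]; norm_num
      obtain ⟨r, hrmem, hfr⟩ := hivt h0mem
      refine ⟨r, ?_, hfr⟩
      rcases hrmem.1.lt_or_eq with h' | h'
      · exact h'
      · exfalso
        rw [← h', hf0] at hfr
        norm_num at hfr
  · intro h
    refine ⟨hf0, by rw [hf0]; norm_num, heval, ?_⟩
    rw [heval]
    have : (1:ℝ) < 4*m/(3*Real.sqrt 3*q) := (one_lt_div hden).mpr h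
    linarith
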